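/- arXiv:2303.03872 — 2 statements merged into one kernel-verified Lean document; each statement's English description precedes it below -/
import Mathlib

section
/- Let H : [0,1] × ℝ → ℝ be continuous, superlinearly coercive in μ uniformly in s, convex and strictly quasiconvex in μ, and let a ≥ max_{s∈[0,1]} min_{μ∈ℝ} H(s,μ). Then the function s ↦ σ⁺(s) := max{μ ∈ ℝ : H(s,μ) = a} is continuous on [0,1]. -/
/-- For `H : [0,1] × ℝ → ℝ` continuous, superlinearly coercive in `μ`
uniformly in `s`, convex and strictly quasiconvex in `μ`, and
`a ≥ max_{s ∈ [0,1]} min_{μ} H(s,μ)`, the function `s ↦ σ⁺(s) = max {μ : H(s,μ) = a}`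
is continuous on `[0,1]`. -/
theorem statement2
    (H : ℝ → ℝ → ℝ)
    (hcont : Continuous (Function.uncurry H))
    (hsuper : ∀ M : ℝ, ∃ R : ℝ, ∀ s ∈ Set.Icc (0:ℝ) 1, ∀ μ : ℝ, R ≤ |μ| → M * |μ| ≤ H s μ)
    (hconv : ∀ s ∈ Set.Icc (0:ℝ) 1, ConvexOn ℝ Set.univ (fun μ => H s μ))
    (hqconv : ∀ s ∈ Set.Icc (0:ℝ) 1, ∀ μ μ' : ℝ, μ ≠ μ' → ∀ ρ ∈ Set.Ioo (0:ℝ) 1,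
      H s (ρ * μ + (1 - ρ) * μ') < max (H s μ) (H s μ'))
    (a : ℝ)
    (ha : ∀ s ∈ Set.Icc (0:ℝ) 1, sInf (Set.range (H s)) ≤ a)
    (σ : ℝ → ℝ)
    (hσ : ∀ s ∈ Set.Icc (0:ℝ) 1, IsGreatest {μ : ℝ | H s μ = a} (σ s)) :
    ContinuousOn σ (Set.Icc (0:ℝ) 1) := by
  -- continuity in the second variable
  have hcm : ∀ s : ℝ, Continuous (fun μ => H s μ) := fun s =>
    hcont.comp (continuous_const.prodMk continuous_id)
  -- a uniform bound B with H s μ > a for |μ| ≥ B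
  obtain ⟨R, hR⟩ := hsuper (|a| + 1)
  set B : ℝ := max R 1 with hBdef
  have hB1 : (1:ℝ) ≤ B := le_max_right R 1
  have hBgt : ∀ s ∈ Set.Icc (0:ℝ) 1, ∀ μ : ℝ, B ≤ |μ| → a < H s μ := by
    intro s hs μ hμ
    have h1 : (|a| + 1) * |μ| ≤ H s μ := hR s hs μ (le_trans (le_max_left R 1) hμ)
    have h2 : (1:ℝ) ≤ |μ| := le_trans hB1 hμ
    nlinarith [le_abs_self a, abs_nonneg a]
  have hσB : ∀ s ∈ Set.Icc (0:ℝ) 1, |σ s| < B := by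
    intro s hs
    by_contra h
    push_neg at h
    have := hBgt s hs (σ s) h
    rw [(hσ s hs).1] at this
    exact lt_irrefl a this
  have hBa : ∀ s ∈ Set.Icc (0:ℝ) 1, a < H s B := by
    intro s hs
    exact hBgt s hs B (by rw [abs_of_pos (lt_of_lt_of_le one_pos hB1)])
  -- main argument
  intro s₀ hs₀
  by_contra hc
  rw [Metric.continuousWithinAt_iff] at hc
  push_neg at hc
  obtain ⟨ε, hε, hcε⟩ := hc
  -- a sequence witnessing discontinuity
  have hex : ∀ n : ℕ, ∃ y, y ∈ Set.Icc (0:ℝ) 1 ∧ dist y s₀ < 1 / (n + 1) ∧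
      ε ≤ dist (σ y) (σ s₀) := by
    intro n
    obtain ⟨y, hy1, hy2, hy3⟩ := hcε (1 / (n + 1)) (by positivity)
    exact ⟨y, hy1, hy2, hy3⟩
  choose t ht1 ht2 ht3 using hex
  have htend : Filter.Tendsto t Filter.atTop (nhds s₀) := by
    rw [tendsto_iff_dist_tendsto_zero]
    apply squeeze_zero (fun n => dist_nonneg) (fun n => (ht2 n).le)
    exact tendsto_one_div_add_atTop_nhds_zero_nat
  -- Bolzano–Weierstrass on σ ∘ t
  have hmem : ∀ n, σ (t n) ∈ Set.Icc (-B) B := by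
    intro n
    exact abs_le.mp (hσB (t n) (ht1 n)).le
  obtain ⟨μs, hμmem, φ, hφ, hφt⟩ := isCompact_Icc.tendsto_subseq hmem
  have htφ : Filter.Tendsto (t ∘ φ) Filter.atTop (nhds s₀) :=
    htend.comp hφ.tendsto_atTop
  -- the limit μs satisfies H s₀ μs = a
  have hHμs : H s₀ μs = a := by
    have h1 : Filter.Tendsto (fun k => H (t (φ k)) (σ (t (φ k)))) Filter.atTop
        (nhds (H s₀ μs)) := by
      have := (hcont.tendsto (s₀, μs)).comp (htφ.prodMk_nhds hφt)
      exact this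
    have h2 : (fun k => H (t (φ k)) (σ (t (φ k)))) = fun _ => a := by
      funext k
      exact (hσ (t (φ k)) (ht1 (φ k))).1
    rw [h2] at h1
    exact (tendsto_nhds_unique tendsto_const_nhds h1).symm
  have hμle : μs ≤ σ s₀ := (hσ s₀ hs₀).2 hHμs
  have hεμ : ε ≤ dist μs (σ s₀) := by
    have : Filter.Tendsto (fun k => dist (σ (t (φ k))) (σ s₀)) Filter.atTop
        (nhds (dist μs (σ s₀))) := (continuous_id.dist continuous_const).continuousAt.tendsto.comp hφt
    exact le_of_tendsto_of_tendsto' tendsto_const_nhds this (fun k => ht3 (φ k))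
  have hμlt : μs ≤ σ s₀ - ε := by
    rw [Real.dist_eq, abs_sub_comm, abs_of_nonneg (by linarith)] at hεμ
    linarith
  -- the midpoint-type point c
  set c : ℝ := σ s₀ - ε / 2 with hcdef
  have hμsc : μs < c := by simp only [hcdef]; linarith
  have hcσ : c < σ s₀ := by simp only [hcdef]; linarith
  have hHc : H s₀ c < a := by
    set d : ℝ := σ s₀ - μs with hddef
    have hd : 0 < d := by simp only [hddef]; linarith
    set ρ : ℝ := (ε / 2) / d with hρdef
    have hρ0 : 0 < ρ := by positivity
    have hρ1 : ρ < 1 := by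
      rw [hρdef, div_lt_one hd]
      simp only [hddef]; linarith
    have hcomb : ρ * μs + (1 - ρ) * (σ s₀) = c := by
      rw [hcdef, hρdef]
      field_simp
      ring
    have := hqconv s₀ hs₀ μs (σ s₀) (by intro h; rw [h] at hμlt; linarith) ρ ⟨hρ0, hρ1⟩
    rw [hcomb, hHμs, (hσ s₀ hs₀).1, max_self] at this
    exact this
  -- eventually H (t (φ k)) c < a and σ (t (φ k)) < c : contradiction via IVT
  have hev1 : ∀ᶠ k in Filter.atTop, H (t (φ k)) c < a := by
    have h1 : Filter.Tendsto (fun k => H (t (φ k)) c) Filter.atTop (nhds (H s₀ c)) := by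
      have := (hcont.tendsto (s₀, c)).comp (htφ.prodMk_nhds tendsto_const_nhds)
      exact this
    exact h1.eventually_lt_const hHc
  have hev2 : ∀ᶠ k in Filter.atTop, σ (t (φ k)) < c := hφt.eventually_lt_const hμsc
  obtain ⟨k, hk1, hk2⟩ := (hev1.and hev2).exists
  -- intermediate value theorem on [c, B]
  have hcB : c ≤ B := by
    have := hσB s₀ hs₀
    have h2 : σ s₀ ≤ |σ s₀| := le_abs_self _
    linarith
  have hIVT := intermediate_value_Icc hcB (hcm (t (φ k))).continuousOn
  have haIcc : a ∈ Set.Icc (H (t (φ k)) c) (H (t (φ k)) B) :=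
    ⟨hk1.le, (hBa (t (φ k)) (ht1 (φ k))).le⟩
  obtain ⟨ξ, hξmem, hξ⟩ := hIVT haIcc
  have hξle : ξ ≤ σ (t (φ k)) := (hσ (t (φ k)) (ht1 (φ k))).2 hξ
  have : c ≤ ξ := hξmem.1
  linarith
end

section
/- Let L : TΓ → ℝ be the network Lagrangian associated to Hamiltonians {H_γ} and a flux limiter c_x, and for a ∈ ℝ let σ_a be the support function of the a-level sets of the Hamiltonians on TΓ. If c_x ≤ a for all vertices x, then L(x,q) + a ≥ σ_a(x,q) for all (x,q) ∈ TΓ. -/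
open Set

/-! At an interior point, or at a vertex with `q ≠ 0`, the bound is the Fenchel–Young inequality
`μ λ ≤ L_γ(s, λ) + H_γ(s, μ)` on the level set `H_γ(s, μ) = a`: at a vertex, the infimum
defining `σ_a` is bounded by its term at an arc realizing the minimum defining `L`, and a vertex
reached at time `0` of an arc is reached at time `1` of the reversed arc, with opposite velocity.
At a vertex with `q = 0` the bound is the flux limiter condition `0 ≤ -c_x + a`. -/

lemma sSup_levelSet_mul_le_add {f : ℝ → ℝ} {a lam ℓ : ℝ}
    (hℓ : ℓ ∈ upperBounds {v : ℝ | ∃ μ : ℝ, v = lam * μ - f μ}) :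
    sSup {v : EReal | ∃ μ : ℝ, f μ = a ∧ v = ((μ * lam : ℝ) : EReal)} ≤ ((ℓ + a : ℝ) : EReal) := by
  refine sSup_le ?_
  rintro _ ⟨μ, rfl, rfl⟩
  have hFY : lam * μ - f μ ≤ ℓ := hℓ ⟨μ, rfl⟩
  exact EReal.coe_le_coe_iff.2 (by linarith)

lemma HasDerivWithinAt.eq_neg_of_comp_one_sub {E : Type*} [NormedAddCommGroup E]
    [NormedSpace ℝ E] {f g : ℝ → E} {f' g' : E} (hgf : ∀ s, g s = f (1 - s))
    (hf : HasDerivWithinAt f f' (Icc 0 1) 0) (hg : HasDerivWithinAt g g' (Icc 0 1) 1) :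
    g' = -f' := by
  have hreflect : HasDerivWithinAt (fun t : ℝ => 1 - t) (-1) (Icc 0 1) 1 := by
    simpa using ((hasDerivAt_id (1 : ℝ)).const_sub 1).hasDerivWithinAt
  have hmaps : MapsTo (fun t : ℝ => 1 - t) (Icc 0 1) (Icc 0 1) :=
    fun t ht => ⟨by linarith [ht.2], by linarith [ht.1]⟩
  have hcomp : HasDerivWithinAt g ((-1 : ℝ) • f') (Icc 0 1) 1 := by
    rw [funext hgf]
    exact HasDerivWithinAt.scomp (1 : ℝ) (by simpa using hf) hreflect hmaps
  rw [((uniqueDiffOn_Icc one_pos) 1 (by simp)).eq_deriv _ hg hcomp, neg_one_smul]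

lemma exists_arc_end_eq {E : Type*} [NormedAddCommGroup E] [NormedSpace ℝ E] {ι : Type*}
    (γ dγ : ι → ℝ → E)
    (hγderiv : ∀ i, ∀ s ∈ Icc (0 : ℝ) 1, HasDerivWithinAt (γ i) (dγ i s) (Icc (0 : ℝ) 1) s)
    (hsymm : ∀ i, ∃ j, ∀ s : ℝ, γ j s = γ i (1 - s)) {i : ι} {s : ℝ} (hs : s = 0 ∨ s = 1)
    (lam : ℝ) : ∃ j, ∃ μ : ℝ, γ j 1 = γ i s ∧ lam • dγ i s = μ • dγ j 1 := by
  rcases hs with rfl | rfl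
  · obtain ⟨j, hj⟩ := hsymm i
    have hvel : dγ j 1 = -dγ i 0 :=
      HasDerivWithinAt.eq_neg_of_comp_one_sub hj (hγderiv i 0 (by simp)) (hγderiv j 1 (by simp))
    exact ⟨j, -lam, by simp [hj], by simp [hvel]⟩
  · exact ⟨i, lam, rfl, rfl⟩

theorem statement9_general
    (N : ℕ) (ι : Type)
    (γ dγ : ι → ℝ → EuclideanSpace ℝ (Fin N))
    (hγderiv : ∀ i, ∀ s ∈ Set.Icc (0:ℝ) 1, HasDerivWithinAt (γ i) (dγ i s) (Set.Icc (0:ℝ) 1) s)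
    (hsymm : ∀ i, ∃ j, (∀ s : ℝ, γ j s = γ i (1 - s)))
    (H : ι → ℝ → ℝ → ℝ)
    -- vertices
    (V : Set (EuclideanSpace ℝ (Fin N))) (hV : V = {x | ∃ i, x = γ i 0 ∨ x = γ i 1})
    -- flux limiter and level
    (cflux : EuclideanSpace ℝ (Fin N) → ℝ) (a : ℝ)
    (hflux : ∀ x ∈ V, cflux x ≤ a)
    -- local Lagrangians (Legendre transforms of the local Hamiltonians)
    (Lloc : ι → ℝ → ℝ → ℝ)
    (hLloc : ∀ i s lam, IsGreatest {v : ℝ | ∃ μ : ℝ, v = lam * μ - H i s μ} (Lloc i s lam))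
    -- network Lagrangian
    (L : EuclideanSpace ℝ (Fin N) → EuclideanSpace ℝ (Fin N) → ℝ)
    (hLint : ∀ i, ∀ s ∈ Set.Ioo (0:ℝ) 1, ∀ lam : ℝ, L (γ i s) (lam • dγ i s) = Lloc i s lam)
    (hLvert : ∀ x ∈ V, ∀ q, q ≠ 0 → (∃ i, ∃ lam : ℝ, γ i 1 = x ∧ q = lam • dγ i 1) →
      IsLeast {v : ℝ | ∃ i, ∃ lam : ℝ, γ i 1 = x ∧ q = lam • dγ i 1 ∧ v = Lloc i 1 lam} (L x q))
    (hLzero : ∀ x ∈ V, L x 0 = -cflux x)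
    -- support function of the a-level sets, with values in EReal
    (σ : EuclideanSpace ℝ (Fin N) → EuclideanSpace ℝ (Fin N) → EReal)
    (hσint : ∀ i, ∀ s ∈ Set.Ioo (0:ℝ) 1, ∀ lam : ℝ,
      σ (γ i s) (lam • dγ i s) = sSup {v : EReal | ∃ μ : ℝ, H i s μ = a ∧ v = ((μ * lam : ℝ) : EReal)})
    (hσvert : ∀ x ∈ V, ∀ q, q ≠ 0 →
      σ x q = sInf {v : EReal | ∃ i, ∃ lam : ℝ, γ i 1 = x ∧ q = lam • dγ i 1 ∧
        v = sSup {w : EReal | ∃ μ : ℝ, H i 1 μ = a ∧ w = ((μ * lam : ℝ) : EReal)}})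
    (hσzero : ∀ x ∈ V, σ x 0 = 0) :
    ∀ x q : EuclideanSpace ℝ (Fin N),
      (∃ i, ∃ s ∈ Set.Icc (0:ℝ) 1, γ i s = x ∧ ∃ lam : ℝ, q = lam • dγ i s) →
      σ x q ≤ ((L x q + a : ℝ) : EReal) := by
  rintro _ _ ⟨i, s, hs, rfl, lam, rfl⟩
  by_cases hsint : s ∈ Ioo (0 : ℝ) 1
  · rw [hσint i s hsint lam, hLint i s hsint lam]
    exact sSup_levelSet_mul_le_add (hLloc i s lam).2
  have hs01 : s = 0 ∨ s = 1 := by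
    have hend : s ∈ Icc (0 : ℝ) 1 \ Ioo 0 1 := ⟨hs, hsint⟩
    rwa [Icc_sdiff_Ioo_same zero_le_one] at hend
  have hxV : γ i s ∈ V := by
    rw [hV]
    exact ⟨i, hs01.imp (congrArg (γ i)) (congrArg (γ i))⟩
  by_cases hq0 : lam • dγ i s = 0
  · rw [hq0, hσzero _ hxV, hLzero _ hxV]
    exact EReal.coe_nonneg.2 (by linarith [hflux _ hxV])
  obtain ⟨j, μ, hj, hq, hLj⟩ :=
    (hLvert _ hxV _ hq0 (exists_arc_end_eq γ dγ hγderiv hsymm hs01 lam)).1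
  rw [hσvert _ hxV _ hq0, hLj]
  refine (sInf_le ?_).trans (sSup_levelSet_mul_le_add (hLloc j 1 μ).2)
  exact ⟨j, μ, hj, hq, rfl⟩

/-- On a finite embedded network, if the flux limiter satisfies `c_x ≤ a`
at every vertex, then the network Lagrangian satisfies `L(x,q) + a ≥ σ_a(x,q)` for every
tangent pair `(x,q) ∈ TΓ`, where `σ_a` (with values in `EReal`, being `⊥` when the
relevant level sets are empty) is the support function of the `a`-level sets. -/
theorem statement9
    (N : ℕ) (ι : Type) [Fintype ι] [Nonempty ι]
    (γ dγ : ι → ℝ → EuclideanSpace ℝ (Fin N))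
    (hγderiv : ∀ i, ∀ s ∈ Set.Icc (0:ℝ) 1, HasDerivWithinAt (γ i) (dγ i s) (Set.Icc (0:ℝ) 1) s)
    (hγcont : ∀ i, ContinuousOn (dγ i) (Set.Icc (0:ℝ) 1))
    (hγne : ∀ i, ∀ s ∈ Set.Icc (0:ℝ) 1, dγ i s ≠ 0)
    (hγinj : ∀ i, Set.InjOn (γ i) (Set.Icc (0:ℝ) 1))
    (hsymm : ∀ i, ∃ j, (∀ s : ℝ, γ j s = γ i (1 - s)))
    (H : ι → ℝ → ℝ → ℝ)
    (hHcont : ∀ i, Continuous (Function.uncurry (H i)))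
    (hHsuper : ∀ i, ∀ M : ℝ, ∃ R : ℝ, ∀ s ∈ Set.Icc (0:ℝ) 1, ∀ μ : ℝ, R ≤ |μ| →
      M * |μ| ≤ H i s μ)
    (hHconv : ∀ i s, ConvexOn ℝ Set.univ (fun μ => H i s μ))
    (hHsymm : ∀ i, ∃ j, (∀ s : ℝ, γ j s = γ i (1 - s)) ∧ ∀ s μ : ℝ, H j s μ = H i (1 - s) (-μ))
    -- vertices
    (V : Set (EuclideanSpace ℝ (Fin N))) (hV : V = {x | ∃ i, x = γ i 0 ∨ x = γ i 1})
    -- flux limiter and level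
    (cflux : EuclideanSpace ℝ (Fin N) → ℝ) (a : ℝ)
    (hflux : ∀ x ∈ V, cflux x ≤ a)
    -- local Lagrangians (Legendre transforms of the local Hamiltonians)
    (Lloc : ι → ℝ → ℝ → ℝ)
    (hLloc : ∀ i s lam, IsGreatest {v : ℝ | ∃ μ : ℝ, v = lam * μ - H i s μ} (Lloc i s lam))
    -- network Lagrangian
    (L : EuclideanSpace ℝ (Fin N) → EuclideanSpace ℝ (Fin N) → ℝ)
    (hLint : ∀ i, ∀ s ∈ Set.Ioo (0:ℝ) 1, ∀ lam : ℝ, L (γ i s) (lam • dγ i s) = Lloc i s lam)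
    (hLvert : ∀ x ∈ V, ∀ q, q ≠ 0 → (∃ i, ∃ lam : ℝ, γ i 1 = x ∧ q = lam • dγ i 1) →
      IsLeast {v : ℝ | ∃ i, ∃ lam : ℝ, γ i 1 = x ∧ q = lam • dγ i 1 ∧ v = Lloc i 1 lam} (L x q))
    (hLzero : ∀ x ∈ V, L x 0 = -cflux x)
    -- support function of the a-level sets, with values in EReal
    (σ : EuclideanSpace ℝ (Fin N) → EuclideanSpace ℝ (Fin N) → EReal)
    (hσint : ∀ i, ∀ s ∈ Set.Ioo (0:ℝ) 1, ∀ lam : ℝ,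
      σ (γ i s) (lam • dγ i s) = sSup {v : EReal | ∃ μ : ℝ, H i s μ = a ∧ v = ((μ * lam : ℝ) : EReal)})
    (hσvert : ∀ x ∈ V, ∀ q, q ≠ 0 →
      σ x q = sInf {v : EReal | ∃ i, ∃ lam : ℝ, γ i 1 = x ∧ q = lam • dγ i 1 ∧
        v = sSup {w : EReal | ∃ μ : ℝ, H i 1 μ = a ∧ w = ((μ * lam : ℝ) : EReal)}})
    (hσzero : ∀ x ∈ V, σ x 0 = 0) :
    ∀ x q : EuclideanSpace ℝ (Fin N),
      (∃ i, ∃ s ∈ Set.Icc (0:ℝ) 1, γ i s = x ∧ ∃ lam : ℝ, q = lam • dγ i s) →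
      σ x q ≤ ((L x q + a : ℝ) : EReal) :=
  statement9_general N ι γ dγ hγderiv hsymm H V hV cflux a hflux Lloc hLloc L hLint hLvert hLzero σ
    hσint hσvert hσzero
end
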